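/- Massart's finite class lemma: let A ⊆ ℝ^n be a finite set with sup_{a∈A} ‖a‖_2 ≤ r, and let ξ_1,…,ξ_n be i.i.d. Rademacher variables. Then E[max_{a∈A} (1/n) Σ_{i=1}^n ξ_i a_i] ≤ (r/n) √(2 log |A|). -/

import Mathlib

/-!
A Rademacher variable is sub-Gaussian with parameter 1, its mgf being `cosh t ≤ exp (t ^ 2 / 2)`;
by independence, `n⁻¹ ∑ ξᵢ aᵢ` is then sub-Gaussian with parameter `(‖a‖₂ / n) ^ 2 ≤ (r / n) ^ 2`.
For `N` variables that are sub-Gaussian with parameter `c`, Jensen's inequality and the bound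
`exp (t max Xᵢ) ≤ ∑ exp (t Xᵢ)` give `exp (t E[max Xᵢ]) ≤ N exp (c t ^ 2 / 2)` for every `t`,
and the choice `t = √(2 log N / c)` turns this into `E[max Xᵢ] ≤ √(2 c log N)`.
-/

open MeasureTheory ProbabilityTheory Real
open scoped NNReal ENNReal

noncomputable def rademacher : Measure ℝ :=
  (1/2 : ℝ≥0∞) • Measure.dirac 1 + (1/2 : ℝ≥0∞) • Measure.dirac (-1)

lemma integrable_rademacher (g : ℝ → ℝ) : Integrable g rademacher :=
  ((integrable_dirac enorm_lt_top).smul_measure (by norm_num)).add_measure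
    ((integrable_dirac enorm_lt_top).smul_measure (by norm_num))

lemma integral_rademacher (g : ℝ → ℝ) : ∫ x, g x ∂rademacher = (g 1 + g (-1)) / 2 := by
  rw [rademacher, integral_add_measure, integral_smul_measure, integral_smul_measure,
    integral_dirac, integral_dirac]
  · norm_num
    ring
  all_goals exact (integrable_dirac enorm_lt_top).smul_measure (by norm_num)

lemma hasSubgaussianMGF_id_rademacher : HasSubgaussianMGF id 1 rademacher where
  integrable_exp_mul _ := integrable_rademacher _
  mgf_le t := by
    rw [mgf, integral_rademacher]
    simpa [cosh_eq] using cosh_le_exp_half_sq t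

namespace ProbabilityTheory.HasSubgaussianMGF

variable {Ω : Type*} {mΩ : MeasurableSpace Ω} {μ : Measure Ω} {X : Ω → ℝ} {c d : ℝ≥0}

lemma of_map_eq_rademacher (hX : AEMeasurable X μ) (hlaw : μ.map X = rademacher) :
    HasSubgaussianMGF X 1 μ :=
  (id_map_iff hX).1 (hlaw ▸ hasSubgaussianMGF_id_rademacher)

lemma mono (h : HasSubgaussianMGF X c μ) (hcd : c ≤ d) : HasSubgaussianMGF X d μ where
  integrable_exp_mul := h.integrable_exp_mul
  mgf_le t := (h.mgf_le t).trans (exp_le_exp.2 (by gcongr))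

lemma mul_const (h : HasSubgaussianMGF X c μ) (a : ℝ) :
    HasSubgaussianMGF (fun ω ↦ X ω * a) (‖a‖₊ ^ 2 * c) μ := by
  convert h.const_mul a using 1
  · exact funext fun ω ↦ mul_comm _ _
  · ext
    simp only [NNReal.coe_mul, NNReal.coe_pow, coe_nnnorm, Real.norm_eq_abs, sq_abs]
    rfl

lemma sum_mul_of_iIndepFun {ι : Type*} [Fintype ι] {ξ : ι → Ω → ℝ} (hindep : iIndepFun ξ μ)
    {c : ι → ℝ≥0} (h : ∀ i, HasSubgaussianMGF (ξ i) (c i) μ) (a : ι → ℝ) :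
    HasSubgaussianMGF (fun ω ↦ ∑ i, ξ i ω * a i) (∑ i, ‖a i‖₊ ^ 2 * c i) μ :=
  sum_of_iIndepFun (hindep.comp (fun i x ↦ x * a i) fun _ ↦ measurable_mul_const _)
    fun i _ ↦ (h i).mul_const (a i)

end ProbabilityTheory.HasSubgaussianMGF

lemma le_sqrt_of_forall_mul_le_add {x c L : ℝ} (hc : 0 ≤ c)
    (h : ∀ t > 0, x * t ≤ L + c * t ^ 2 / 2) : x ≤ √(2 * c * L) := by
  rcases le_or_gt x 0 with hx | hx
  · exact hx.trans (sqrt_nonneg _)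
  rcases hc.eq_or_lt with rfl | hc
  · have := h ((|L| + 1) / x) (by positivity)
    rw [mul_div_cancel₀ _ hx.ne'] at this
    linarith [le_abs_self L]
  · have := h (x / c) (div_pos hx hc)
    rw [le_sqrt' hx]
    field_simp at this
    nlinarith

section Maximal

variable {Ω ι : Type*} {mΩ : MeasurableSpace Ω} {μ : Measure Ω} [Nonempty ι] {X : ι → Ω → ℝ}

lemma comp_ciSup_le_sum [Fintype ι] (f : ι → ℝ) {g : ℝ → ℝ} (hg : ∀ x, 0 ≤ g x) :
    g (⨆ i, f i) ≤ ∑ i, g (f i) := by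
  obtain ⟨j, hj⟩ := exists_eq_ciSup_of_finite (f := f)
  rw [← hj]
  exact Finset.single_le_sum (f := fun i ↦ g (f i)) (fun _ _ ↦ hg _) (Finset.mem_univ j)

lemma MeasureTheory.integrable_comp_iSup [Finite ι] {g : ℝ → ℝ} (hg : Measurable g)
    (hX : ∀ i, AEMeasurable (X i) μ) (h : ∀ i, Integrable (fun ω ↦ g (X i ω)) μ) :
    Integrable (fun ω ↦ g (⨆ i, X i ω)) μ := by
  have := Fintype.ofFinite ι
  exact (integrable_finsetSum Finset.univ fun i _ ↦ (h i).norm).mono'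
    (hg.comp_aemeasurable (AEMeasurable.iSup hX)).aestronglyMeasurable
    (ae_of_all _ fun ω ↦ comp_ciSup_le_sum (X · ω) fun _ ↦ norm_nonneg _)

variable [Fintype ι] [IsProbabilityMeasure μ] {c : ℝ≥0}

lemma exp_mul_integral_iSup_le (h : ∀ i, HasSubgaussianMGF (X i) c μ) (t : ℝ) :
    exp (t * ∫ ω, ⨆ i, X i ω ∂μ) ≤ Fintype.card ι * exp (c * t ^ 2 / 2) := by
  have hX i : AEMeasurable (X i) μ := (h i).aemeasurable
  have hexp_int : Integrable (fun ω ↦ exp (t * ⨆ i, X i ω)) μ :=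
    integrable_comp_iSup (g := fun x ↦ exp (t * x)) (by fun_prop) hX
      fun i ↦ (h i).integrable_exp_mul t
  calc exp (t * ∫ ω, ⨆ i, X i ω ∂μ) = exp (∫ ω, t * ⨆ i, X i ω ∂μ) := by
        rw [integral_const_mul]
    _ ≤ ∫ ω, exp (t * ⨆ i, X i ω) ∂μ :=
        convexOn_exp.map_integral_le continuous_exp.continuousOn isClosed_univ
          (ae_of_all _ fun _ ↦ Set.mem_univ _)
          ((integrable_comp_iSup measurable_id hX fun i ↦ (h i).integrable).const_mul t)
          hexp_int
    _ ≤ ∫ ω, ∑ i, exp (t * X i ω) ∂μ :=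
        integral_mono hexp_int (integrable_finsetSum _ fun i _ ↦ (h i).integrable_exp_mul t)
          fun ω ↦ comp_ciSup_le_sum (X · ω) fun _ ↦ (exp_pos _).le
    _ = ∑ i, mgf (X i) μ t := integral_finsetSum _ fun i _ ↦ (h i).integrable_exp_mul t
    _ ≤ ∑ _i : ι, exp (c * t ^ 2 / 2) := Finset.sum_le_sum fun i _ ↦ (h i).mgf_le t
    _ = Fintype.card ι * exp (c * t ^ 2 / 2) := by simp

theorem integral_iSup_le_of_hasSubgaussianMGF (h : ∀ i, HasSubgaussianMGF (X i) c μ) :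
    ∫ ω, ⨆ i, X i ω ∂μ ≤ √(2 * c * log (Fintype.card ι)) := by
  refine le_sqrt_of_forall_mul_le_add c.coe_nonneg fun t _ ↦ ?_
  have hcard : (0 : ℝ) < Fintype.card ι := by exact_mod_cast Fintype.card_pos
  have := exp_mul_integral_iSup_le h t
  rw [← exp_log hcard, ← exp_add, exp_le_exp] at this
  linarith

end Maximal

theorem massart_finite_class_general {Ω : Type*} [MeasurableSpace Ω]
    (P : Measure Ω) [IsProbabilityMeasure P]
    (n : ℕ) (ξ : Fin n → Ω → ℝ)
    (hmeas : ∀ i, Measurable (ξ i))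
    (hlaw : ∀ i, Measure.map (ξ i) P
      = (1/2 : ENNReal) • Measure.dirac (1 : ℝ) + (1/2 : ENNReal) • Measure.dirac (-1 : ℝ))
    (hindep : iIndepFun ξ P)
    (A : Finset (Fin n → ℝ)) (hA : A.Nonempty)
    (r : ℝ) (hr : ∀ a ∈ A, Real.sqrt (∑ i, (a i) ^ 2) ≤ r) :
    ∫ ω, (⨆ a : A, (n : ℝ)⁻¹ * ∑ i, ξ i ω * (a : Fin n → ℝ) i) ∂P
      ≤ r / n * Real.sqrt (2 * Real.log A.card) := by
  have hr₀ : 0 ≤ r := (sqrt_nonneg _).trans (hr _ hA.choose_spec)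
  have : Nonempty A := hA.coe_sort
  have hξ i : HasSubgaussianMGF (ξ i) 1 P :=
    .of_map_eq_rademacher (hmeas i).aemeasurable (hlaw i)
  have hsub (a : A) : HasSubgaussianMGF (fun ω ↦ (n : ℝ)⁻¹ * ∑ i, ξ i ω * (a : Fin n → ℝ) i)
      ⟨(r / n) ^ 2, sq_nonneg _⟩ P := by
    refine ((HasSubgaussianMGF.sum_mul_of_iIndepFun hindep hξ a).const_mul _).mono ?_
    have hnorm := (sqrt_le_left hr₀).1 (hr a a.2)
    refine NNReal.coe_le_coe.1 ?_
    -- `const_mul` states its factor as a bare `Subtype.mk`, which the cast lemmas do not match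
    change (n : ℝ)⁻¹ ^ 2 * ((∑ i, ‖(a : Fin n → ℝ) i‖₊ ^ 2 * 1 : ℝ≥0) : ℝ) ≤ (r / n) ^ 2
    push_cast
    simp only [mul_one, Real.norm_eq_abs, sq_abs]
    rw [inv_pow, div_pow, div_eq_inv_mul]
    gcongr
  calc _ ≤ √(2 * ((r / n) ^ 2) * log (Fintype.card A)) :=
        integral_iSup_le_of_hasSubgaussianMGF hsub
    _ = r / n * √(2 * log A.card) := by
        rw [Fintype.card_coe, mul_comm 2, mul_assoc, sqrt_mul (sq_nonneg _),
          sqrt_sq (by positivity)]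

/-- Massart's finite class lemma: for a finite set `A ⊆ ℝ^n` with `‖a‖₂ ≤ r` for all
`a ∈ A`, and i.i.d. Rademacher variables `ξ_1, …, ξ_n`,
`E[max_{a ∈ A} (1/n) Σ_i ξ_i a_i] ≤ (r/n) √(2 log |A|)`. -/
theorem massart_finite_class {Ω : Type*} [MeasurableSpace Ω]
    (P : Measure Ω) [IsProbabilityMeasure P]
    (n : ℕ) (hn : 0 < n) (ξ : Fin n → Ω → ℝ)
    (hmeas : ∀ i, Measurable (ξ i))
    (hlaw : ∀ i, Measure.map (ξ i) P
      = (1/2 : ENNReal) • Measure.dirac (1 : ℝ) + (1/2 : ENNReal) • Measure.dirac (-1 : ℝ))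
    (hindep : iIndepFun ξ P)
    (A : Finset (Fin n → ℝ)) (hA : A.Nonempty)
    (r : ℝ) (hr : ∀ a ∈ A, Real.sqrt (∑ i, (a i) ^ 2) ≤ r) :
    ∫ ω, (⨆ a : A, (n : ℝ)⁻¹ * ∑ i, ξ i ω * (a : Fin n → ℝ) i) ∂P
      ≤ r / n * Real.sqrt (2 * Real.log A.card) :=
  massart_finite_class_general P n ξ hmeas hlaw hindep A hA r hr
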